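/- For the block compound symmetry precision matrix Σ_l⁻¹ applied to a vector partitioned by treatment within the block: the GLS treatment effect for L equal-sized strata (n_l = n) with covariance I_L ⊗ J_n + σ_0² I_{Ln} can be written as a convex combination τ̂ = λ τ̂_1 + (1−λ) τ̂_0 with λ ∈ [0,1], where τ̂_1 is a weighted average of within-stratum mean differences and τ̂_0 = Ȳ_1 − Ȳ_0, with weight λ = N Σ_l n_{l(0)}n_{l(1)} / (n_1 n_0 σ_0² + N Σ_l n_{l(0)}n_{l(1)}). -/

import Mathlib

/-!
Write `Σ = K + σ₀² I` with `K = I_L ⊗ J_n`. Since `K² = n K`, the inverse is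
`Σ⁻¹ = σ₀⁻² (I - K / (σ₀² + n))`, so the GLS normal equations `1ᵀ Σ⁻¹ r = 0` and `Aᵀ Σ⁻¹ r = 0`
for the residual `r = Y - μ 1 - τ A` only involve stratum totals. Eliminating `μ` leaves the
single linear equation
`τ (n₁ n₀ σ₀² + N Σ_l n_{l(0)} n_{l(1)}) = N Σ_l n_{l(0)} n_{l(1)} τ̂₁ + n₁ n₀ σ₀² τ̂₀`,
whose solution is the claimed convex combination.
-/

open Matrix
open scoped Kronecker

namespace Matrix

theorem inv_add_smul_one_of_mul_self_eq_smul {m R : Type*} [Fintype m] [DecidableEq m] [Field R]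
    {K : Matrix m m R} {c s : R} (hK : K * K = c • K) (hs : s ≠ 0) (hsc : s + c ≠ 0) :
    (K + s • 1)⁻¹ = s⁻¹ • (1 - (s + c)⁻¹ • K) := by
  refine inv_eq_right_inv ?_
  simp only [add_mul, Matrix.mul_smul, mul_sub, mul_one, Matrix.smul_mul, hK, one_mul, smul_sub,
    smul_smul]
  match_scalars
  · field_simp
    ring
  · field_simp

section BlockOnes

variable (ι κ R : Type*) [DecidableEq ι] [Field R]

/-- `I_ι ⊗ J_κ`, the within-block part of the block compound-symmetry covariance. -/
def blockOnes : Matrix (ι × κ) (ι × κ) R := (1 : Matrix ι ι R) ⊗ₖ vecMulVec 1 1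

variable {ι κ R}

theorem blockOnes_apply (p q : ι × κ) :
    blockOnes ι κ R p q = if p.1 = q.1 then 1 else 0 := by
  simp [blockOnes, kroneckerMap_apply, one_apply]

variable [Fintype ι] [Fintype κ]

theorem blockOnes_mul_self :
    blockOnes ι κ R * blockOnes ι κ R = (Fintype.card κ : R) • blockOnes ι κ R := by
  rw [blockOnes, ← mul_kronecker_mul, one_mul, vecMulVec_mul_vecMulVec, one_dotProduct_one,
    ← kronecker_smul, vecMulVec_smul]

theorem blockOnes_mulVec_apply (y : ι × κ → R) (p : ι × κ) :
    (blockOnes ι κ R *ᵥ y) p = ∑ k, y (p.1, k) := by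
  simp only [mulVec, dotProduct, blockOnes_apply, Fintype.sum_prod_type, ite_mul, one_mul,
    zero_mul]
  rw [Finset.sum_eq_single p.1 (fun i _ hi => by simp [Ne.symm hi]) (by simp)]
  simp

theorem dotProduct_blockOnes_mulVec (x y : ι × κ → R) :
    x ⬝ᵥ (blockOnes ι κ R *ᵥ y) = ∑ i, (∑ k, x (i, k)) * ∑ k, y (i, k) := by
  simp [dotProduct, blockOnes_mulVec_apply, Fintype.sum_prod_type, Finset.sum_mul]

variable [DecidableEq κ] {s : R}

theorem dotProduct_inv_blockOnes_add_smul_one_mulVec (hs : s ≠ 0)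
    (hsκ : s + Fintype.card κ ≠ 0) (x y : ι × κ → R) :
    x ⬝ᵥ ((blockOnes ι κ R + s • 1)⁻¹ *ᵥ y) =
      s⁻¹ * (x ⬝ᵥ y - (s + Fintype.card κ)⁻¹ * ∑ i, (∑ k, x (i, k)) * ∑ k, y (i, k)) := by
  rw [inv_add_smul_one_of_mul_self_eq_smul blockOnes_mul_self hs hsκ]
  simp only [smul_mulVec, sub_mulVec, one_mulVec, dotProduct_smul, dotProduct_sub,
    dotProduct_blockOnes_mulVec, smul_eq_mul]

theorem one_dotProduct_inv_blockOnes_add_smul_one_mulVec (hs : s ≠ 0)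
    (hsκ : s + Fintype.card κ ≠ 0) (y : ι × κ → R) :
    1 ⬝ᵥ ((blockOnes ι κ R + s • 1)⁻¹ *ᵥ y) = (s + Fintype.card κ)⁻¹ * ∑ p, y p := by
  rw [dotProduct_inv_blockOnes_add_smul_one_mulVec hs hsκ, one_dotProduct,
    Fintype.sum_prod_type]
  simp only [Pi.one_apply, Finset.sum_const, Finset.card_univ, nsmul_eq_mul, mul_one,
    ← Finset.mul_sum]
  field_simp
  ring

end BlockOnes

end Matrix

section Residual

variable {R κ : Type*} [CommRing R] [Fintype κ]

theorem sum_residual_eq (A Y : κ → R) (μ τ : R) :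
    ∑ k, (Y k - μ - τ * A k) = ∑ k, Y k - Fintype.card κ * μ - τ * ∑ k, A k := by
  simp [Finset.sum_sub_distrib, Finset.mul_sum]

theorem sum_mul_residual_eq {A : κ → R} (hA : ∀ k, A k * A k = A k) (Y : κ → R) (μ τ : R) :
    ∑ k, A k * (Y k - μ - τ * A k) = ∑ k, A k * Y k - (μ + τ) * ∑ k, A k := by
  rw [Finset.mul_sum, ← Finset.sum_sub_distrib]
  refine Finset.sum_congr rfl fun k _ => ?_
  linear_combination (-τ) * hA k

end Residual

theorem gls_normal_equations_blockOnes {ι κ : Type*} [Fintype ι] [Fintype κ] [DecidableEq ι]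
    [DecidableEq κ] {s μ τ : ℝ} (hs : 0 < s) {A Y : ι × κ → ℝ} (hA : ∀ p, A p * A p = A p)
    (heq1 : 1 ⬝ᵥ ((blockOnes ι κ ℝ + s • 1)⁻¹ *ᵥ (Y - μ • 1 - τ • A)) = 0)
    (heq2 : A ⬝ᵥ ((blockOnes ι κ ℝ + s • 1)⁻¹ *ᵥ (Y - μ • 1 - τ • A)) = 0) :
    ∑ i, (∑ k, Y (i, k) - Fintype.card κ * μ - τ * ∑ k, A (i, k)) = 0 ∧
      (s + Fintype.card κ) * ∑ i, (∑ k, A (i, k) * Y (i, k) - (μ + τ) * ∑ k, A (i, k)) =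
        ∑ i, (∑ k, A (i, k)) * (∑ k, Y (i, k) - Fintype.card κ * μ - τ * ∑ k, A (i, k)) := by
  have hsκ : s + Fintype.card κ ≠ 0 := by positivity
  have hr : Y - μ • 1 - τ • A = fun p => Y p - μ - τ * A p := by
    ext p
    simp
  have hR (i : ι) := sum_residual_eq (fun k => A (i, k)) (fun k => Y (i, k)) μ τ
  have hAr (i : ι) := sum_mul_residual_eq (fun k => hA (i, k)) (fun k => Y (i, k)) μ τ
  rw [hr] at heq1 heq2
  rw [one_dotProduct_inv_blockOnes_add_smul_one_mulVec hs.ne' hsκ, Fintype.sum_prod_type] at heq1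
  rw [dotProduct_inv_blockOnes_add_smul_one_mulVec hs.ne' hsκ, dotProduct,
    Fintype.sum_prod_type] at heq2
  simp only [hR] at heq1 heq2
  simp only [hAr] at heq2
  refine ⟨(mul_eq_zero.mp heq1).resolve_left (inv_ne_zero hsκ), ?_⟩
  have h := (mul_eq_zero.mp heq2).resolve_left (inv_ne_zero hs.ne')
  rwa [sub_eq_zero, eq_inv_mul_iff_mul_eq₀ hsκ] at h

theorem tau_mul_eq_of_stratified_normal_equations {ι : Type*} [Fintype ι] {n s μ τ : ℝ}
    {a b Y1 Y0 : ι → ℝ} (hab : ∀ i, a i + b i = n)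
    (h1 : ∑ i, (a i * Y1 i + b i * Y0 i - n * μ - τ * a i) = 0)
    (h2 : (s + n) * ∑ i, (a i * Y1 i - (μ + τ) * a i) =
      ∑ i, a i * (a i * Y1 i + b i * Y0 i - n * μ - τ * a i)) :
    τ * ((∑ i, a i) * (∑ i, b i) * s + (∑ i, a i + ∑ i, b i) * ∑ i, b i * a i) =
      (∑ i, a i + ∑ i, b i) * ∑ i, b i * a i * (Y1 i - Y0 i) +
        s * ((∑ i, b i) * ∑ i, a i * Y1 i - (∑ i, a i) * ∑ i, b i * Y0 i) := by
  have e1 : ∑ i, (a i * Y1 i + b i * Y0 i - (a i + b i) * μ - τ * a i) = 0 := by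
    simpa only [hab] using h1
  have e2 : ∑ i, (s * (a i * Y1 i - (μ + τ) * a i) + b i * a i * (Y1 i - Y0 i) - τ * (b i * a i))
      = 0 := by
    rw [← sub_eq_zero, Finset.mul_sum, ← Finset.sum_sub_distrib] at h2
    rw [← h2]
    refine Finset.sum_congr rfl fun i _ => ?_
    rw [← hab i]
    ring
  simp only [Finset.sum_add_distrib, Finset.sum_sub_distrib, ← Finset.mul_sum,
    ← Finset.sum_mul] at e1 e2
  linear_combination (-(∑ i, a i + ∑ i, b i)) * e2 + s * (∑ i, a i) * e1

theorem div_add_mem_Icc_and_eq_convex_combination {p q t x y : ℝ} (hp : 0 ≤ p) (hq : 0 ≤ q)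
    (hqp : 0 < q + p) (h : t * (q + p) = p * x + q * y) :
    p / (q + p) ∈ Set.Icc (0 : ℝ) 1 ∧ t = p / (q + p) * x + (1 - p / (q + p)) * y := by
  refine ⟨⟨div_nonneg hp hqp.le, div_le_one_of_le₀ (by linarith) hqp.le⟩, ?_⟩
  field_simp
  linear_combination h

theorem tau_eq_convex_combination_of_stratified_normal_equations {ι : Type*} [Fintype ι]
    [Nonempty ι] {n s μ τ : ℝ} (hs : 0 < s) {a b Y1 Y0 : ι → ℝ} (ha : ∀ i, 0 < a i) (hb : ∀ i, 0 < b i)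
    (hab : ∀ i, a i + b i = n)
    (h1 : ∑ i, (a i * Y1 i + b i * Y0 i - n * μ - τ * a i) = 0)
    (h2 : (s + n) * ∑ i, (a i * Y1 i - (μ + τ) * a i) =
      ∑ i, a i * (a i * Y1 i + b i * Y0 i - n * μ - τ * a i)) :
    (∑ i, a i + ∑ i, b i) * (∑ i, b i * a i) /
        ((∑ i, a i) * (∑ i, b i) * s + (∑ i, a i + ∑ i, b i) * ∑ i, b i * a i) ∈
        Set.Icc (0 : ℝ) 1 ∧
      τ = (∑ i, a i + ∑ i, b i) * (∑ i, b i * a i) /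
          ((∑ i, a i) * (∑ i, b i) * s + (∑ i, a i + ∑ i, b i) * ∑ i, b i * a i) *
          ((∑ i, b i * a i * (Y1 i - Y0 i)) / ∑ i, b i * a i) +
        (1 - (∑ i, a i + ∑ i, b i) * (∑ i, b i * a i) /
          ((∑ i, a i) * (∑ i, b i) * s + (∑ i, a i + ∑ i, b i) * ∑ i, b i * a i)) *
          ((∑ i, a i * Y1 i) / ∑ i, a i - (∑ i, b i * Y0 i) / ∑ i, b i) := by
  have hA : 0 < ∑ i, a i := Finset.sum_pos (fun i _ => ha i) Finset.univ_nonempty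
  have hB : 0 < ∑ i, b i := Finset.sum_pos (fun i _ => hb i) Finset.univ_nonempty
  have hD : 0 < ∑ i, b i * a i :=
    Finset.sum_pos (fun i _ => mul_pos (hb i) (ha i)) Finset.univ_nonempty
  refine div_add_mem_Icc_and_eq_convex_combination (by positivity) (by positivity)
    (by positivity) ?_
  field_simp
  linear_combination tau_mul_eq_of_stratified_normal_equations hab h1 h2

theorem stmt16_general (L n : ℕ) (hL : 0 < L) (σ02 : ℝ) (hσ : 0 < σ02)
    (A Y : Fin L × Fin n → ℝ) (hA01 : ∀ p, A p = 0 ∨ A p = 1)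
    (n1l n0l : Fin L → ℝ)
    (hn1l : ∀ l, n1l l = ∑ j, A (l, j)) (hn0l : ∀ l, n0l l = n - n1l l)
    (hpos1 : ∀ l, 0 < n1l l) (hpos0 : ∀ l, 0 < n0l l)
    (n1 n0 N : ℝ) (hn1 : n1 = ∑ l, n1l l) (hn0 : n0 = ∑ l, n0l l) (hN : N = (L : ℝ) * n)
    (Sig : Matrix (Fin L × Fin n) (Fin L × Fin n) ℝ)
    (hSig : ∀ p q, Sig p q = (if p.1 = q.1 then 1 else 0) + (if p = q then σ02 else 0))
    (Yl1 Yl0 : Fin L → ℝ)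
    (hYl1 : ∀ l, Yl1 l = (∑ j, A (l, j) * Y (l, j)) / n1l l)
    (hYl0 : ∀ l, Yl0 l = (∑ j, (1 - A (l, j)) * Y (l, j)) / n0l l)
    (Yb1 Yb0 : ℝ)
    (hYb1 : Yb1 = (∑ p, A p * Y p) / n1)
    (hYb0 : Yb0 = (∑ p, (1 - A p) * Y p) / n0)
    (τ1 τ0 lam : ℝ)
    (hτ1 : τ1 = (∑ l, n0l l * n1l l * (Yl1 l - Yl0 l)) / (∑ l, n0l l * n1l l))
    (hτ0 : τ0 = Yb1 - Yb0)
    (hlam : lam = N * (∑ l, n0l l * n1l l) / (n1 * n0 * σ02 + N * (∑ l, n0l l * n1l l)))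
    (one : Fin L × Fin n → ℝ) (hone : one = fun _ => 1)
    (μ τ : ℝ)
    (heq1 : one ⬝ᵥ (Sig⁻¹ *ᵥ (Y - μ • one - τ • A)) = 0)
    (heq2 : A ⬝ᵥ (Sig⁻¹ *ᵥ (Y - μ • one - τ • A)) = 0) :
    lam ∈ Set.Icc (0 : ℝ) 1 ∧ τ = lam * τ1 + (1 - lam) * τ0 := by
  obtain rfl : one = 1 := hone
  have hSig' : Sig = blockOnes (Fin L) (Fin n) ℝ + σ02 • 1 := by
    ext p q
    simp [hSig, blockOnes_apply, one_apply]
  have hA : ∀ p, A p * A p = A p := fun p => by rcases hA01 p with h | h <;> simp [h]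
  have hT (l : Fin L) : ∑ j, A (l, j) * Y (l, j) = n1l l * Yl1 l := by
    rw [hYl1, mul_div_cancel₀ _ (hpos1 l).ne']
  have hU (l : Fin L) : ∑ j, (1 - A (l, j)) * Y (l, j) = n0l l * Yl0 l := by
    rw [hYl0, mul_div_cancel₀ _ (hpos0 l).ne']
  have hS (l : Fin L) : ∑ j, Y (l, j) = n1l l * Yl1 l + n0l l * Yl0 l := by
    rw [← hT, ← hU, ← Finset.sum_add_distrib]
    exact Finset.sum_congr rfl fun j _ => by ring
  obtain ⟨h1, h2⟩ := gls_normal_equations_blockOnes hσ hA (hSig' ▸ heq1) (hSig' ▸ heq2)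
  simp only [← hn1l, hT, hS, Fintype.card_fin] at h1 h2
  have hN' : N = n1 + n0 := by
    rw [hN, hn1, hn0, ← Finset.sum_add_distrib]
    simp [hn0l]
  have : Nonempty (Fin L) := ⟨⟨0, hL⟩⟩
  rw [hlam, hτ1, hτ0, hYb1, hYb0, Fintype.sum_prod_type, Fintype.sum_prod_type, hN', hn1, hn0]
  simp only [hT, hU]
  exact tau_eq_convex_combination_of_stratified_normal_equations hσ hpos1 hpos0
    (fun l => by rw [hn0l]; ring) h1 h2

/-- Stratified design with L equal-sized strata and covariance I_L ⊗ J_n + σ₀² I: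
the GLS treatment effect is a convex combination τ̂ = λ τ̂₁ + (1−λ) τ̂₀ with
λ = N·Σ_l n_{l(0)}n_{l(1)} / (n₁n₀σ₀² + N·Σ_l n_{l(0)}n_{l(1)}) ∈ [0,1],
where τ̂₁ is the weighted average of within-stratum mean differences and τ̂₀ = Ȳ₁ − Ȳ₀. -/
theorem stmt16 (L n : ℕ) (hL : 0 < L) (hn : 0 < n) (σ02 : ℝ) (hσ : 0 < σ02)
    (A Y : Fin L × Fin n → ℝ) (hA01 : ∀ p, A p = 0 ∨ A p = 1)
    (n1l n0l : Fin L → ℝ)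
    (hn1l : ∀ l, n1l l = ∑ j, A (l, j)) (hn0l : ∀ l, n0l l = n - n1l l)
    (hpos1 : ∀ l, 0 < n1l l) (hpos0 : ∀ l, 0 < n0l l)
    (n1 n0 N : ℝ) (hn1 : n1 = ∑ l, n1l l) (hn0 : n0 = ∑ l, n0l l) (hN : N = (L : ℝ) * n)
    (Sig : Matrix (Fin L × Fin n) (Fin L × Fin n) ℝ)
    (hSig : ∀ p q, Sig p q = (if p.1 = q.1 then 1 else 0) + (if p = q then σ02 else 0))
    (Yl1 Yl0 : Fin L → ℝ)
    (hYl1 : ∀ l, Yl1 l = (∑ j, A (l, j) * Y (l, j)) / n1l l)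
    (hYl0 : ∀ l, Yl0 l = (∑ j, (1 - A (l, j)) * Y (l, j)) / n0l l)
    (Yb1 Yb0 : ℝ)
    (hYb1 : Yb1 = (∑ p, A p * Y p) / n1)
    (hYb0 : Yb0 = (∑ p, (1 - A p) * Y p) / n0)
    (τ1 τ0 lam : ℝ)
    (hτ1 : τ1 = (∑ l, n0l l * n1l l * (Yl1 l - Yl0 l)) / (∑ l, n0l l * n1l l))
    (hτ0 : τ0 = Yb1 - Yb0)
    (hlam : lam = N * (∑ l, n0l l * n1l l) / (n1 * n0 * σ02 + N * (∑ l, n0l l * n1l l)))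
    (one : Fin L × Fin n → ℝ) (hone : one = fun _ => 1)
    (μ τ : ℝ)
    (heq1 : one ⬝ᵥ (Sig⁻¹ *ᵥ (Y - μ • one - τ • A)) = 0)
    (heq2 : A ⬝ᵥ (Sig⁻¹ *ᵥ (Y - μ • one - τ • A)) = 0) :
    lam ∈ Set.Icc (0 : ℝ) 1 ∧ τ = lam * τ1 + (1 - lam) * τ0 :=
  stmt16_general L n hL σ02 hσ A Y hA01 n1l n0l hn1l hn0l hpos1 hpos0 n1 n0 N hn1 hn0 hN Sig hSig
    Yl1 Yl0 hYl1 hYl0 Yb1 Yb0 hYb1 hYb0 τ1 τ0 lam hτ1 hτ0 hlam one hone μ τ heq1 heq2
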